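/- Let (e_k) be a nonnegative sequence satisfying e_{k+1} ≤ ρ₀ e_k + c · max_{1≤n≤T} e_{k−n} for all k ≥ 0, with 0 ≤ ρ₀ < 1 and c ≥ 0 such that ρ₀ + c < 1. Then there exist constants C ≥ 0 and θ ∈ (ρ₀ + c, 1) with e_k ≤ C θ^k for all k, i.e., the sequence converges linearly to zero. -/

import Mathlib

/-!
Pick a rate `θ < 1` so close to `1` that `ρ θ^T + c ≤ θ^(T+1)`; this is possible because the
two sides differ by `1 - ρ - c > 0` at `θ = 1`. Then the geometric majorant `M θ^k` is itself
a supersolution of the delayed recursion, and strong induction, started from the maximum `M`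
of the `T + 1` initial values, keeps `e_k` below it.
-/

open Filter Topology Finset

lemma exists_rate_pow_succ_ge (T : ℕ) {ρ c : ℝ} (h : ρ + c < 1) :
    ∃ θ : ℝ, ρ + c < θ ∧ θ < 1 ∧ ρ * θ ^ T + c ≤ θ ^ (T + 1) := by
  have hgap : Tendsto (fun θ : ℝ => θ ^ (T + 1) - ρ * θ ^ T - c) (𝓝[<] 1)
      (𝓝 (1 ^ (T + 1) - ρ * 1 ^ T - c)) :=
    ((by fun_prop : Continuous fun θ : ℝ => θ ^ (T + 1) - ρ * θ ^ T - c).tendsto 1).mono_left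
      nhdsWithin_le_nhds
  have hpos : 0 < (1 : ℝ) ^ (T + 1) - ρ * 1 ^ T - c := by simp; linarith
  obtain ⟨θ, ⟨hθgap, hθlb⟩, hθ1⟩ := ((hgap.eventually (eventually_gt_nhds hpos)).and
    ((eventually_gt_nhds h).filter_mono nhdsWithin_le_nhds) |>.and self_mem_nhdsWithin).exists
  exact ⟨θ, hθlb, hθ1, by linarith⟩

/-- Indexed by `j + T` so that the delayed arguments `j + T - n`, `n ≤ T`, never truncate. -/
lemma le_mul_pow_of_delayed_recursion {f : ℕ → ℝ} {T : ℕ} (hne : (Icc 1 T).Nonempty)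
    {ρ c θ K : ℝ} (hρ : 0 ≤ ρ) (hc : 0 ≤ c) (hθ0 : 0 < θ) (hθ1 : θ ≤ 1) (hK : 0 ≤ K)
    (hθ : ρ * θ ^ T + c ≤ θ ^ (T + 1)) (hinit : ∀ m ≤ T, f m ≤ K * θ ^ m)
    (hrec : ∀ j : ℕ,
      f (j + T + 1) ≤ ρ * f (j + T) + c * (Icc 1 T).sup' hne (fun n => f (j + T - n)))
    (m : ℕ) : f m ≤ K * θ ^ m := by
  induction m using Nat.strong_induction_on with
  | _ m ih =>
    rcases le_or_gt m T with hm | hm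
    · exact hinit m hm
    obtain ⟨j, rfl⟩ : ∃ j, m = j + T + 1 := ⟨m - T - 1, by omega⟩
    have hlast : f (j + T) ≤ K * θ ^ (j + T) := ih _ (by omega)
    have hdelayed : (Icc 1 T).sup' hne (fun n => f (j + T - n)) ≤ K * θ ^ j := by
      refine sup'_le _ _ fun n hn => ?_
      have hn := mem_Icc.mp hn
      calc f (j + T - n) ≤ K * θ ^ (j + T - n) := ih _ (by omega)
        _ ≤ K * θ ^ j := by gcongr K * ?_; exact pow_le_pow_of_le_one hθ0.le hθ1 (by omega)
    calc f (j + T + 1) ≤ ρ * (K * θ ^ (j + T)) + c * (K * θ ^ j) := by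
          refine (hrec j).trans ?_; gcongr
      _ = K * θ ^ j * (ρ * θ ^ T + c) := by ring
      _ ≤ K * θ ^ j * θ ^ (T + 1) := by gcongr
      _ = K * θ ^ (j + T + 1) := by ring

lemma delayed_recursion_shift {T : ℕ} (hne : (Icc 1 T).Nonempty) {e : ℤ → ℝ} {ρ c : ℝ}
    (hrec : ∀ k : ℤ, 0 ≤ k →
      e (k + 1) ≤ ρ * e k + c * (Icc 1 T).sup' hne (fun n => e (k - n)))
    (j : ℕ) :
    e ((j + T + 1 : ℕ) - T) ≤
      ρ * e ((j + T : ℕ) - T) + c * (Icc 1 T).sup' hne (fun n => e ((j + T - n : ℕ) - T)) := by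
  have hsup : (Icc 1 T).sup' hne (fun n => e ((j + T - n : ℕ) - T)) =
      (Icc 1 T).sup' hne (fun n => e (j - n)) :=
    sup'_congr hne rfl fun n hn => by
      have hnT := (mem_Icc.mp hn).2
      congr 1; omega
  rw [hsup]
  convert hrec j (Nat.cast_nonneg j) using 4 <;> push_cast <;> ring

theorem delayed_recursion_linear_convergence_general (T : ℕ)
    (hne : (Finset.Icc 1 T).Nonempty)
    (e : ℤ → ℝ) (rho c : ℝ)
    (hrho0 : 0 ≤ rho) (hc : 0 ≤ c) (hsum : rho + c < 1)
    (hnonneg : ∀ k : ℤ, -(T : ℤ) ≤ k → 0 ≤ e k)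
    (hrec : ∀ k : ℤ, 0 ≤ k →
      e (k + 1) ≤ rho * e k + c * (Finset.Icc 1 T).sup' hne (fun n => e (k - n))) :
    ∃ C : ℝ, 0 ≤ C ∧ ∃ θ : ℝ, rho + c < θ ∧ θ < 1 ∧ ∀ k : ℕ, e k ≤ C * θ ^ k := by
  obtain ⟨θ, hθlb, hθ1, hθ⟩ := exists_rate_pow_succ_ge T hsum
  have hθ0 : 0 < θ := by linarith
  set f : ℕ → ℝ := fun m => e (m - T) with hf
  set M := (range (T + 1)).sup' nonempty_range_add_one f
  have hM : 0 ≤ M := (hnonneg _ (by simp)).trans (le_sup' f (mem_range.mpr T.succ_pos))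
  have hinit (m : ℕ) (hm : m ≤ T) : f m ≤ M / θ ^ T * θ ^ m := by
    have hpow : θ ^ T ≤ θ ^ m := pow_le_pow_of_le_one hθ0.le hθ1.le hm
    calc f m ≤ M := le_sup' f (mem_range.mpr (by omega))
      _ ≤ M / θ ^ T * θ ^ m := by
        rw [div_mul_eq_mul_div, le_div_iff₀ (by positivity)]; gcongr
  refine ⟨M, hM, θ, hθlb, hθ1, fun k => ?_⟩
  calc e k = f (k + T) := by simp [hf]
    _ ≤ M / θ ^ T * θ ^ (k + T) :=
      le_mul_pow_of_delayed_recursion hne hrho0 hc hθ0 hθ1.le (by positivity) hθ hinit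
        (delayed_recursion_shift hne hrec) _
    _ = M * θ ^ k := by field_simp; ring

theorem delayed_recursion_linear_convergence (T : ℕ) (hT : 1 ≤ T)
    (hne : (Finset.Icc 1 T).Nonempty)
    (e : ℤ → ℝ) (rho c : ℝ)
    (hrho0 : 0 ≤ rho) (hrho1 : rho < 1) (hc : 0 ≤ c) (hsum : rho + c < 1)
    (hnonneg : ∀ k : ℤ, -(T : ℤ) ≤ k → 0 ≤ e k)
    (hrec : ∀ k : ℤ, 0 ≤ k →
      e (k + 1) ≤ rho * e k + c * (Finset.Icc 1 T).sup' hne (fun n => e (k - n))) :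
    ∃ C : ℝ, 0 ≤ C ∧ ∃ θ : ℝ, rho + c < θ ∧ θ < 1 ∧ ∀ k : ℕ, e k ≤ C * θ ^ k :=
  delayed_recursion_linear_convergence_general T hne e rho c hrho0 hc hsum hnonneg hrec
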